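/- arXiv:1704.05587 — 7 statements merged into one kernel-verified Lean document; each statement's English description precedes it below -/
import Mathlib

section
/- Let C ⊆ ℕ have at least two elements and let E be the singular equivalence relation on ℕ with non-singleton class C. Then an equivalence relation F on ℕ is a complement of E in the lattice of equivalence relations on ℕ (i.e. E ⊓ F = ⊥ and E ⊔ F = ⊤) if and only if every equivalence class of F contains exactly one element of C. -/
/-- The singular equivalence relation on ℕ with (possibly) non-singleton class `C`:
it relates `x` and `y` iff `x = y` or both `x` and `y` belong to `C`. -/
def singularSetoid (C : Set ℕ) : Setoid ℕ where
  r x y := x = y ∨ (x ∈ C ∧ y ∈ C)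
  iseqv := by
    constructor
    · intro x; exact Or.inl rfl
    · rintro x y (rfl | ⟨hx, hy⟩)
      · exact Or.inl rfl
      · exact Or.inr ⟨hy, hx⟩
    · rintro x y z (rfl | ⟨hx, hy⟩) (rfl | ⟨hy', hz⟩)
      · exact Or.inl rfl
      · exact Or.inr ⟨hy', hz⟩
      · exact Or.inr ⟨hx, hy⟩
      · exact Or.inr ⟨hx, hz⟩

/-- For `C ⊆ ℕ` with at least two elements and `E` the singular equivalence
relation with non-singleton class `C`, an equivalence relation `F` is a
complement of `E` in the lattice `Setoid ℕ` iff every equivalence class of `F`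
contains exactly one element of `C`. -/
theorem singular_isCompl_iff (C : Set ℕ) (hC : ∃ a ∈ C, ∃ b ∈ C, a ≠ b)
    (F : Setoid ℕ) :
    IsCompl (singularSetoid C) F ↔ ∀ x : ℕ, ∃! c : ℕ, c ∈ C ∧ F.r x c := by
  constructor
  · intro h x
    -- existence: use E ⊔ F = ⊤
    have hsup := h.sup_eq_top
    rw [Setoid.sup_eq_eqvGen] at hsup
    obtain ⟨a, ha, -⟩ := hC
    have hrel : Relation.EqvGen (fun u v => (singularSetoid C) u v ∨ F u v) x a := by
      have : (Relation.EqvGen.setoid (fun u v => (singularSetoid C) u v ∨ F u v)) x a := by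
        rw [hsup]; trivial
      exact this
    have key : ∀ u v, Relation.EqvGen (fun u v => (singularSetoid C) u v ∨ F u v) u v →
        ((∃ c ∈ C, F u c) ↔ (∃ c ∈ C, F v c)) := by
      intro u v huv
      induction huv with
      | rel u v hr =>
        rcases hr with (rfl | ⟨hu, hv⟩) | hf
        · rfl
        · constructor
          · intro _; exact ⟨v, hv, F.refl v⟩
          · intro _; exact ⟨u, hu, F.refl u⟩
        · constructor
          · rintro ⟨c, hc, hfc⟩; exact ⟨c, hc, F.trans (F.symm hf) hfc⟩
          · rintro ⟨c, hc, hfc⟩; exact ⟨c, hc, F.trans hf hfc⟩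
      | refl u => rfl
      | symm _ _ _ ih => exact ih.symm
      | trans _ _ _ _ _ ih1 ih2 => exact ih1.trans ih2
    have hex : ∃ c ∈ C, F x c := (key x a hrel).mpr ⟨a, ha, F.refl a⟩
    obtain ⟨c, hc, hfc⟩ := hex
    refine ⟨c, ⟨hc, hfc⟩, ?_⟩
    rintro d ⟨hd, hfd⟩
    -- uniqueness: use E ⊓ F = ⊥
    have hinf := h.inf_eq_bot
    have : (singularSetoid C ⊓ F) d c := by
      exact Setoid.inf_iff_and.mpr ⟨Or.inr ⟨hd, hc⟩, F.trans (F.symm hfd) hfc⟩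
    rw [hinf] at this
    exact this
  · intro h
    constructor
    · rw [disjoint_iff]
      apply le_antisymm _ bot_le
      rw [Setoid.le_def]
      intro x y hxy
      rcases Setoid.inf_iff_and.mp hxy with ⟨(rfl | ⟨hx, hy⟩), hf⟩
      · rfl
      · obtain ⟨c, -, hu⟩ := h x
        have h1 : x = c := hu x ⟨hx, F.refl x⟩
        have h2 : y = c := hu y ⟨hy, hf⟩
        show (⊥ : Setoid ℕ) x y
        rw [Setoid.bot_def]
        exact h1.trans h2.symm
    · rw [codisjoint_iff]
      apply le_antisymm le_top
      rw [Setoid.le_def]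
      intro x y _
      obtain ⟨c, ⟨hc, hfc⟩, -⟩ := h x
      obtain ⟨d, ⟨hd, hfd⟩, -⟩ := h y
      have hF : F ≤ singularSetoid C ⊔ F := le_sup_right
      have hE : singularSetoid C ≤ singularSetoid C ⊔ F := le_sup_left
      rw [Setoid.le_def] at hF hE
      exact Setoid.trans' _ (hF hfc)
        (Setoid.trans' _ (hE (Or.inr ⟨hc, hd⟩)) (Setoid.symm' _ (hF hfd)))
end

section
/- Every automatic equivalence relation on ℕ has only finitely many equivalence classes, i.e. its quotient is a finite type. -/
/-- Binary representation of `n : ℕ` over the alphabet `Option Bool`,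
where the separator `□` is `none` and the digits `0`, `1` are `some false`, `some true`. -/
def natBits (n : ℕ) : List (Option Bool) := (Nat.bits n).map some

/-- The language `{ bits(m) ++ [□] ++ bits(n) | E relates m and n }` associated to an
equivalence relation `E` on ℕ. -/
def autoLang (E : Setoid ℕ) : Language (Option Bool) :=
  {w | ∃ m n : ℕ, E.r m n ∧ w = natBits m ++ [none] ++ natBits n}

/-- An equivalence relation on ℕ is automatic if its associated language is regular,
i.e. accepted by some deterministic finite automaton. -/
def IsAutomatic (E : Setoid ℕ) : Prop := (autoLang E).IsRegular

/-! The state of an automaton for `autoLang E` after reading `bits(m) ++ [□]` determines the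
set of `n` with `E m n`, i.e. the class of `m`; so the left quotients of the (regular) language
by these words separate the classes, and there are only finitely many left quotients
(Myhill–Nerode). -/

theorem Nat.bits_injective : Function.Injective Nat.bits := fun m n h =>
  Nat.digits.injective 2 <| by rw [Nat.digits_two_eq_bits, Nat.digits_two_eq_bits, h]

theorem natBits_injective : Function.Injective natBits :=
  (List.map_injective_iff.2 (Option.some_injective _)).comp Nat.bits_injective

theorem none_notMem_natBits (n : ℕ) : none ∉ natBits n := by
  simp [natBits]

theorem natBits_append_none_inj {m n m' n' : ℕ} :
    natBits m ++ none :: natBits n = natBits m' ++ none :: natBits n' ↔ m = m' ∧ n = n' := by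
  rw [List.append_cons_inj_of_notMem (none_notMem_natBits m) (none_notMem_natBits n)]
  simp [natBits_injective.eq_iff]

theorem natBits_mem_leftQuotient_autoLang (E : Setoid ℕ) (m n : ℕ) :
    natBits n ∈ (autoLang E).leftQuotient (natBits m ++ [none]) ↔ E.r m n := by
  simp only [autoLang]
  constructor
  · rintro ⟨m', n', hE, h⟩
    obtain ⟨rfl, rfl⟩ := natBits_append_none_inj.1 (by simpa using h)
    exact hE
  · exact fun hE => ⟨m, n, hE, rfl⟩

/-- Every automatic equivalence relation on ℕ has finitely many equivalence classes. -/
theorem automatic_finite_quotient (E : Setoid ℕ) (hE : IsAutomatic E) :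
    Finite (Quotient E) := by
  have := hE.finite_range_leftQuotient.to_subtype
  let f : Quotient E → Set.range (autoLang E).leftQuotient := fun q =>
    ⟨(autoLang E).leftQuotient (natBits q.out ++ [none]), _, rfl⟩
  refine Finite.of_injective f fun q q' hqq' => ?_
  have hsame := congrArg (natBits q'.out ∈ ·.val) hqq'
  simp only [f, natBits_mem_leftQuotient_autoLang, eq_iff_iff] at hsame
  rw [← q.out_eq, ← q'.out_eq]
  exact Quotient.sound (hsame.2 (E.refl _))
end

section
/- The set of automatic equivalence relations on ℕ is upward closed in the lattice Setoid ℕ: if E is automatic and E ≤ F (every pair related by E is related by F), then F is automatic. -/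
/-! Left quotients do the work. The left quotient of `autoLang E` by `bits(m) □` is the set of
binary representations of the `E`-class of `m`; by Myhill–Nerode it is regular and there are only
finitely many of them. Since `E ≤ F`, `autoLang F` is the union over `F`-related pairs `(m, n)` of
`bits([m]_E) · □ · bits([n]_E)`, a union of finitely many distinct languages. Each is regular: if
`c` occurs in no word of `A`, every left quotient of `A · c · B` is `0`, a left quotient of `B`,
or `A' · c · B` for a left quotient `A'` of `A`. -/

namespace List

variable {α : Type*} {c : α}

theorem append_cons_eq_append_cons_iff {u u' v v' : List α} (hu : c ∉ u) (hu' : c ∉ u') :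
    u ++ c :: v = u' ++ c :: v' ↔ u = u' ∧ v = v' := by
  refine ⟨fun h => ?_, by rintro ⟨rfl, rfl⟩; rfl⟩
  rcases append_eq_append_iff.1 h with ⟨_ | ⟨d, a⟩, rfl, hv⟩ | ⟨_ | ⟨d, a⟩, rfl, hv⟩
  · simpa using hv
  · simp_all
  · simpa [eq_comm] using hv
  · simp_all

theorem exists_eq_append_cons_notMem [DecidableEq α] {x : List α} (hx : c ∈ x) :
    ∃ u r, c ∉ u ∧ x = u ++ c :: r :=
  let ⟨u, r, hu, hx, _⟩ := exists_erase_eq hx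
  ⟨u, r, hu, hx⟩

end List

namespace Language

variable {α : Type*} {L A B : Language α} {c : α}

theorem isRegular_zero : (0 : Language α).IsRegular :=
  ⟨Unit, inferInstance, ⟨fun _ _ => (), (), ∅⟩, by ext; simp [DFA.mem_accepts]⟩

theorem IsRegular.leftQuotient (h : L.IsRegular) (x : List α) : (L.leftQuotient x).IsRegular :=
  .of_finite_range_leftQuotient <| h.finite_range_leftQuotient.subset <| by
    rintro _ ⟨y, rfl⟩
    exact ⟨x ++ y, leftQuotient_append L x y⟩

theorem isRegular_sSup {S : Set (Language α)} (hS : S.Finite) (h : ∀ K ∈ S, K.IsRegular) :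
    (sSup S).IsRegular := by
  induction S, hS using Set.Finite.induction_on with
  | empty => rw [sSup_empty]; exact isRegular_zero
  | insert _ _ ih =>
    rw [sSup_insert]
    exact (h _ (Set.mem_insert _ _)).add (ih fun K hK => h K (Set.mem_insert_of_mem _ hK))

theorem isRegular_iSup {ι : Sort*} {L : ι → Language α} (hfin : (Set.range L).Finite)
    (h : ∀ i, (L i).IsRegular) : (⨆ i, L i).IsRegular :=
  isRegular_sSup hfin (Set.forall_mem_range.2 h)

theorem mem_mul_singleton_mul {w : List α} :
    w ∈ A * {[c]} * B ↔ ∃ u ∈ A, ∃ v ∈ B, w = u ++ c :: v := by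
  constructor
  · rintro ⟨_, ⟨u, hu, _, rfl, rfl⟩, v, hv, rfl⟩
    exact ⟨u, hu, v, hv, by simp⟩
  · rintro ⟨u, hu, v, hv, rfl⟩
    exact ⟨u ++ [c], ⟨u, hu, [c], rfl, rfl⟩, v, hv, by simp⟩

theorem leftQuotient_mul_singleton_mul_of_notMem {x : List α} (hx : c ∉ x) :
    (A * {[c]} * B).leftQuotient x = A.leftQuotient x * {[c]} * B := by
  ext y
  simp only [mem_leftQuotient, mem_mul_singleton_mul]
  constructor
  · rintro ⟨u, hu, v, hv, h⟩
    rcases List.append_eq_append_iff.1 h with ⟨a, rfl, rfl⟩ | ⟨_ | ⟨d, a⟩, rfl, hy⟩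
    · exact ⟨a, hu, v, hv, rfl⟩
    · exact ⟨[], by simpa using hu, v, hv, by rw [List.nil_append] at hy; simp [hy]⟩
    · obtain ⟨rfl, -⟩ := List.cons_eq_cons.1 hy
      simp at hx
  · rintro ⟨a, ha, v, hv, rfl⟩
    exact ⟨x ++ a, ha, v, hv, by simp⟩

open Classical in
theorem leftQuotient_mul_singleton_mul_append_cons (hA : ∀ u ∈ A, c ∉ u) {u : List α}
    (hu : c ∉ u) (r : List α) :
    (A * {[c]} * B).leftQuotient (u ++ c :: r) = if u ∈ A then B.leftQuotient r else 0 := by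
  ext y
  simp only [mem_leftQuotient, mem_mul_singleton_mul, List.append_assoc, List.cons_append]
  have key : ∀ u' ∈ A, ∀ v, u ++ c :: (r ++ y) = u' ++ c :: v ↔ u = u' ∧ r ++ y = v :=
    fun u' hu' v => List.append_cons_eq_append_cons_iff hu (hA u' hu')
  split_ifs with h
  · refine ⟨fun ⟨u', hu', v, hv, heq⟩ => ?_, fun hy => ⟨u, h, r ++ y, hy, rfl⟩⟩
    obtain ⟨rfl, rfl⟩ := (key u' hu' v).1 heq
    exact hv
  · refine ⟨fun ⟨u', hu', v, hv, heq⟩ => ?_, fun hy => absurd hy (notMem_zero y)⟩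
    obtain ⟨rfl, rfl⟩ := (key u' hu' v).1 heq
    exact absurd hu' h

theorem IsRegular.mul_singleton_mul (hA : A.IsRegular) (hB : B.IsRegular)
    (hc : ∀ u ∈ A, c ∉ u) : (A * {[c]} * B).IsRegular := by
  classical
  refine .of_finite_range_leftQuotient <| Set.Finite.subset
    (((hA.finite_range_leftQuotient.image fun K => K * {[c]} * B).union
      hB.finite_range_leftQuotient).insert 0) ?_
  rintro _ ⟨x, rfl⟩
  by_cases hx : c ∈ x
  · obtain ⟨u, r, hu, rfl⟩ := List.exists_eq_append_cons_notMem hx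
    rw [leftQuotient_mul_singleton_mul_append_cons hc hu]
    split_ifs
    · exact Or.inr (Or.inr ⟨r, rfl⟩)
    · exact Or.inl rfl
  · rw [leftQuotient_mul_singleton_mul_of_notMem hx]
    exact Or.inr (Or.inl ⟨_, ⟨x, rfl⟩, rfl⟩)

end Language

def natBitsClass (E : Setoid ℕ) (m : ℕ) : Language (Option Bool) :=
  natBits '' {n | E.r m n}

theorem mem_autoLang {E : Setoid ℕ} {w : List (Option Bool)} :
    w ∈ autoLang E ↔ ∃ m n, E.r m n ∧ w = natBits m ++ none :: natBits n := by
  simp only [autoLang, List.append_assoc, List.singleton_append]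
  rfl

theorem leftQuotient_autoLang (E : Setoid ℕ) (m : ℕ) :
    (autoLang E).leftQuotient (natBits m ++ [none]) = natBitsClass E m := by
  ext w
  rw [Language.mem_leftQuotient, mem_autoLang, List.append_assoc, List.singleton_append]
  constructor
  · rintro ⟨m', n, hE, h⟩
    obtain ⟨hm, rfl⟩ := (List.append_cons_eq_append_cons_iff (none_notMem_natBits m)
      (none_notMem_natBits m')).1 h
    exact ⟨n, natBits_injective hm ▸ hE, rfl⟩
  · rintro ⟨n, hE, rfl⟩
    exact ⟨m, n, hE, rfl⟩

theorem IsAutomatic.finite_range_natBitsClass {E : Setoid ℕ} (hE : IsAutomatic E) :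
    (Set.range (natBitsClass E)).Finite :=
  hE.finite_range_leftQuotient.subset <| by
    rintro _ ⟨m, rfl⟩
    exact ⟨_, leftQuotient_autoLang E m⟩

theorem IsAutomatic.isRegular_natBitsClass {E : Setoid ℕ} (hE : IsAutomatic E) (m : ℕ) :
    (natBitsClass E m).IsRegular :=
  leftQuotient_autoLang E m ▸ hE.leftQuotient _

theorem autoLang_eq_iSup_natBitsClass {E F : Setoid ℕ} (hle : E ≤ F) :
    autoLang F = ⨆ p : {p : ℕ × ℕ // F.r p.1 p.2},
      natBitsClass E p.1.1 * {[none]} * natBitsClass E p.1.2 := by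
  ext w
  rw [mem_autoLang, Language.mem_iSup]
  simp only [Language.mem_mul_singleton_mul]
  constructor
  · rintro ⟨m, n, hF, rfl⟩
    exact ⟨⟨⟨m, n⟩, hF⟩, _, ⟨m, E.refl m, rfl⟩, _, ⟨n, E.refl n, rfl⟩, rfl⟩
  · rintro ⟨⟨⟨m, n⟩, hF⟩, _, ⟨m', hm, rfl⟩, _, ⟨n', hn, rfl⟩, rfl⟩
    exact ⟨m', n', F.trans (F.symm (hle hm)) (F.trans hF (hle hn)), rfl⟩

/-- The automatic equivalence relations on ℕ are upward closed in `Setoid ℕ`. -/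
theorem automatic_upward_closed (E F : Setoid ℕ) (hE : IsAutomatic E) (hle : E ≤ F) :
    IsAutomatic F := by
  rw [IsAutomatic, autoLang_eq_iSup_natBitsClass hle]
  refine Language.isRegular_iSup ?_ fun _ => (hE.isRegular_natBitsClass _).mul_singleton_mul
    (hE.isRegular_natBitsClass _) fun _ ⟨_, _, hu⟩ => hu ▸ none_notMem_natBits _
  refine (hE.finite_range_natBitsClass.image2 (fun K K' => K * {[none]} * K')
    hE.finite_range_natBitsClass).subset ?_
  rintro _ ⟨p, rfl⟩
  exact ⟨_, ⟨_, rfl⟩, _, ⟨_, rfl⟩, rfl⟩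
end

section
/- There exist two computable equivalence relations E and F on ℕ whose join E ⊔ F in the lattice of equivalence relations (the smallest equivalence relation containing both) is not computable. Hence the computable equivalence relations do not form a sublattice of Setoid ℕ. -/
/-!
Lay out `ℕ ≃ ℕ × ℕ` as a grid of columns, one for each program `n`. The first relation glues the
base point `(n, 0)` to `(n, s + 1)` as soon as `n` halts (on input `0`) within `s` steps; the
second glues all points `(n, k)` with `k ≥ 1` together. Both are kernels of computable maps, so
both are decidable. In their join, `(n, 0)` and `(n, 1)` are related exactly when some point
`(n, s + 1)` is glued to the base, i.e. exactly when `n` halts, so deciding the join would decide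
the halting problem.
-/

open Nat.Partrec (Code)
open Nat.Partrec.Code

theorem Setoid.ker_le_ker_of_factor {α β γ : Type*} {f : α → β} {k : α → γ} (g : β → γ)
    (hg : ∀ a, g (f a) = k a) : Setoid.ker f ≤ Setoid.ker k :=
  fun x y (hxy : f x = f y) => show k x = k y by rw [← hg, ← hg, hxy]

theorem ComputablePred.comp {α β : Type*} [Primcodable α] [Primcodable β] {p : β → Prop}
    {g : α → β} (hp : ComputablePred p) (hg : Computable g) : ComputablePred fun a => p (g a) :=
  let ⟨_, hp⟩ := hp
  ⟨inferInstance, hp.comp hg⟩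

theorem ComputablePred.setoid_ker {α β : Type*} [Primcodable α] [Primcodable β] [DecidableEq β]
    {f : α → β} (hf : Computable f) :
    ComputablePred fun p : α × α => (Setoid.ker f).r p.1 p.2 :=
  (Primrec.eq.decide.to_comp.comp (hf.comp .fst) (hf.comp .snd)).computablePred

theorem Nat.Partrec.Code.eval_dom_iff_exists_evaln_isSome (c : Code) (n : ℕ) :
    (eval c n).Dom ↔ ∃ k, (evaln k c n).isSome := by
  simp only [Part.dom_iff_mem, evaln_complete, Option.isSome_iff_exists]
  exact exists_comm

def haltsWithin (n s : ℕ) : Bool :=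
  (evaln s (Denumerable.ofNat Code n) 0).isSome

theorem primrec₂_haltsWithin : Primrec₂ haltsWithin :=
  Primrec.option_isSome.comp <| primrec_evaln.comp <|
    (Primrec.snd.pair ((Primrec.ofNat Code).comp .fst)).pair (Primrec.const 0)

theorem not_computablePred_exists_haltsWithin : ¬ComputablePred fun n => ∃ s, haltsWithin n s := by
  intro h
  refine ComputablePred.halting_problem 0 ((h.comp Computable.encode).of_eq fun c => ?_)
  simp [haltsWithin, eval_dom_iff_exists_evaln_isSome]

section

variable (p : ℕ → ℕ → Bool)

/-- At `x.2 = 0` the truncated `x.2 - 1` is harmless: both branches return `x`. -/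
def linkToBase (x : ℕ × ℕ) : ℕ × ℕ := bif p x.1 (x.2 - 1) then (x.1, 0) else x

def mergeTail (x : ℕ × ℕ) : ℕ × ℕ := (x.1, min x.2 1)

open Classical in
noncomputable def collapseColumn (x : ℕ × ℕ) : ℕ × ℕ :=
  if ∃ s, p x.1 s then (x.1, 0) else mergeTail x

def linkSetoid : Setoid ℕ := Setoid.ker (linkToBase p ∘ Nat.unpair)

def tailSetoid : Setoid ℕ := Setoid.ker (mergeTail ∘ Nat.unpair)

theorem collapseColumn_linkToBase (x : ℕ × ℕ) :
    collapseColumn p (linkToBase p x) = collapseColumn p x := by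
  cases h : p x.1 (x.2 - 1)
  · simp [linkToBase, h]
  · simp [linkToBase, collapseColumn, h, show ∃ s, p x.1 s from ⟨_, h⟩]

theorem collapseColumn_mergeTail (x : ℕ × ℕ) :
    collapseColumn p (mergeTail x) = collapseColumn p x := by
  unfold collapseColumn mergeTail
  rw [min_assoc, min_self]

theorem linkSetoid_sup_tailSetoid_le :
    linkSetoid p ⊔ tailSetoid ≤ Setoid.ker (collapseColumn p ∘ Nat.unpair) :=
  sup_le (Setoid.ker_le_ker_of_factor (collapseColumn p) fun _ => collapseColumn_linkToBase p _)
    (Setoid.ker_le_ker_of_factor (collapseColumn p) fun _ => collapseColumn_mergeTail p _)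

theorem linkSetoid_sup_tailSetoid_iff (n : ℕ) :
    (linkSetoid p ⊔ tailSetoid) (Nat.pair n 0) (Nat.pair n 1) ↔ ∃ s, p n s := by
  constructor
  · intro h
    have hcollapse := linkSetoid_sup_tailSetoid_le p h
    by_contra hn
    simp [collapseColumn, mergeTail, hn] at hcollapse
  · rintro ⟨s, hs⟩
    have hlink : linkSetoid p (Nat.pair n 0) (Nat.pair n (s + 1)) :=
      Setoid.ker_def.2 (by simp [linkToBase, hs])
    have htail : tailSetoid (Nat.pair n (s + 1)) (Nat.pair n 1) :=
      Setoid.ker_def.2 (by simp [mergeTail])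
    exact (linkSetoid p ⊔ tailSetoid).iseqv.trans (Setoid.le_def.1 le_sup_left hlink)
      (Setoid.le_def.1 le_sup_right htail)

theorem computablePred_linkSetoid (hp : Computable₂ p) :
    ComputablePred fun q : ℕ × ℕ => (linkSetoid p).r q.1 q.2 :=
  ComputablePred.setoid_ker <| (Computable.cond
    (hp.comp .fst (Primrec.nat_sub.to_comp.comp .snd (.const 1)))
    (Computable.fst.pair (.const 0)) .id).comp Computable.unpair

theorem computablePred_tailSetoid :
    ComputablePred fun q : ℕ × ℕ => tailSetoid.r q.1 q.2 :=
  ComputablePred.setoid_ker <| (Computable.fst.pair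
    (Primrec.nat_min.to_comp.comp .snd (.const 1))).comp Computable.unpair

end

/-- There are two computable equivalence relations on ℕ whose join is not computable;
hence the computable equivalence relations do not form a sublattice of `Setoid ℕ`. -/
theorem computable_not_closed_under_sup :
    ∃ E F : Setoid ℕ,
      ComputablePred (fun p : ℕ × ℕ => E.r p.1 p.2) ∧
      ComputablePred (fun p : ℕ × ℕ => F.r p.1 p.2) ∧
      ¬ ComputablePred (fun p : ℕ × ℕ => (E ⊔ F).r p.1 p.2) := by
  refine ⟨linkSetoid haltsWithin, tailSetoid,
    computablePred_linkSetoid _ primrec₂_haltsWithin.to_comp, computablePred_tailSetoid,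
    fun hsup => not_computablePred_exists_haltsWithin ?_⟩
  have hbase : Primrec fun n => (Nat.pair n 0, Nat.pair n 1) :=
    (Primrec₂.natPair.comp .id (.const 0)).pair (Primrec₂.natPair.comp .id (.const 1))
  exact (hsup.comp hbase.to_comp).of_eq (linkSetoid_sup_tailSetoid_iff haltsWithin)
end

section
/- There exists a recursively enumerable equivalence relation E on ℕ such that no complement of E in the lattice of equivalence relations is recursively enumerable: for every equivalence relation F with E ⊓ F = ⊥ and E ⊔ F = ⊤, the predicate fun p : ℕ × ℕ => F relates p.1 p.2 is not r.e. -/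
/-!
Collapse the halting set `K` to a single point to obtain an r.e. equivalence relation `E`.
If `F` is a complement of `E`, then `E ⊓ F = ⊥` says that distinct elements of `K` are never
`F`-related, while `E ⊔ F = ⊤` says that every number is `F`-related to some element of `K`,
because the `F`-saturation of `K` is closed under both `E` and `F`. Hence `x ∉ K` exactly when
`x` is `F`-related to an element of `K` other than `x`, so if `F` were r.e. then so would be the
complement of `K`.
-/

/-- A predicate is recursively enumerable (r.e.); `RePred` is Mathlib's name for it. -/
abbrev REPred' {α : Type} [Primcodable α] (p : α → Prop) : Prop := REPred p

open Nat.Partrec Code Encodable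

namespace REPred

variable {α : Type*} [Primcodable α] {p q : α → Prop}

protected theorem comp {β : Type*} [Primcodable β] {r : β → Prop} {f : α → β} (hr : REPred r)
    (hf : Computable f) : REPred fun a => r (f a) :=
  Partrec.comp hr hf

protected theorem and (hp : REPred p) (hq : REPred q) : REPred fun a => p a ∧ q a :=
  (hp.bind (hq.comp Computable.fst).to₂).of_eq fun a => Part.ext fun u => by
    simp [Part.mem_assert_iff]

protected theorem or (hp : REPred p) (hq : REPred q) : REPred fun a => p a ∨ q a := by
  obtain ⟨k, hk, hdom⟩ := Partrec.merge' hp hq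
  exact hk.dom_re.of_eq fun a => by simp [(hdom a).2, Part.assert]

/-- Dovetailing: search for a pair `(k, n)` such that `n` decodes to some `b` and the code of `q`
halts on `(a, b)` within `k` steps. -/
theorem exists_snd {β : Type*} [Primcodable β] {q : α × β → Prop} (hq : REPred q) :
    REPred fun a => ∃ b, q (a, b) := by
  obtain ⟨c, hc⟩ := exists_code.1 hq
  have hhalts : ∀ x, (∃ v, v ∈ eval c (encode x)) ↔ q x := fun x => by
    simp [hc, Part.mem_assert_iff]
  have hsearch : Computable₂ fun (a : α) (k : ℕ) =>
      (decode (α := β) k.unpair.2).bind fun b => evaln k.unpair.1 c (encode (a, b)) := by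
    have hstep : Computable fun x : (α × ℕ) × β => ((x.1.2.unpair.1, c), encode (x.1.1, x.2)) :=
      ((Computable.fst.comp (Computable.unpair.comp (Computable.snd.comp Computable.fst))).pair
        (Computable.const c)).pair
        (Computable.encode.comp ((Computable.fst.comp Computable.fst).pair Computable.snd))
    have heval := primrec_evaln.to_comp.comp hstep
    exact Computable.option_bind
      (Computable.decode.comp (Computable.snd.comp (Computable.unpair.comp Computable.snd))) heval
  refine (Partrec.rfindOpt hsearch).dom_re.of_eq fun a => ?_
  rw [Nat.rfindOpt_dom]
  constructor
  · rintro ⟨k, v, hv⟩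
    obtain ⟨b, -, hv⟩ := Option.bind_eq_some_iff.1 hv
    exact ⟨b, (hhalts _).1 ⟨v, evaln_sound hv⟩⟩
  · rintro ⟨b, hb⟩
    obtain ⟨v, hv⟩ := (hhalts (a, b)).2 hb
    obtain ⟨k, hk⟩ := evaln_complete.1 hv
    exact ⟨Nat.pair k (encode b), v, by simpa using hk⟩

end REPred

theorem ComputablePred.eq_fst_snd {α : Type*} [Primcodable α] :
    ComputablePred fun p : α × α => p.1 = p.2 := by
  classical
  exact (Primrec.eq.comp Primrec.fst Primrec.snd).computablePred

namespace Setoid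

variable {α : Type*}

def collapse (A : Set α) : Setoid α where
  r x y := x = y ∨ (x ∈ A ∧ y ∈ A)
  iseqv :=
    { refl := fun _ => Or.inl rfl
      symm := by rintro x y (rfl | ⟨hx, hy⟩) <;> simp_all
      trans := by rintro x y z (rfl | ⟨hx, hy⟩) (rfl | ⟨hy', hz⟩) <;> simp_all }

theorem iff_of_sup_eq_top {E F : Setoid α} (h : E ⊔ F = ⊤) {p : α → Prop}
    (hE : ∀ ⦃x y⦄, E x y → (p x ↔ p y)) (hF : ∀ ⦃x y⦄, F x y → (p x ↔ p y)) (x y : α) :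
    p x ↔ p y := by
  have hle : E ⊔ F ≤ ker p :=
    sup_le (fun _ _ hxy => propext (hE hxy)) (fun _ _ hxy => propext (hF hxy))
  rw [h] at hle
  exact iff_of_eq (hle trivial)

variable {A : Set α} {F : Setoid α}

theorem eq_of_isCompl_collapse (h : IsCompl (collapse A) F) {a b : α} (ha : a ∈ A) (hb : b ∈ A)
    (hab : F a b) : a = b := by
  have hinf : (collapse A ⊓ F) a b := ⟨Or.inr ⟨ha, hb⟩, hab⟩
  rwa [h.inf_eq_bot, bot_def] at hinf

theorem exists_mem_rel_of_isCompl_collapse (h : IsCompl (collapse A) F) (hA : A.Nonempty)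
    (x : α) : ∃ a ∈ A, F x a := by
  obtain ⟨a₀, ha₀⟩ := hA
  refine (iff_of_sup_eq_top h.sup_eq_top (p := fun x => ∃ a ∈ A, F x a) ?_ ?_ a₀ x).1
    ⟨a₀, ha₀, F.refl' a₀⟩
  · rintro x y (rfl | ⟨hx, hy⟩)
    · rfl
    · exact iff_of_true ⟨x, hx, F.refl' x⟩ ⟨y, hy, F.refl' y⟩
  · exact fun x y hxy => ⟨fun ⟨a, ha, hxa⟩ => ⟨a, ha, F.trans' (F.symm' hxy) hxa⟩,
      fun ⟨a, ha, hya⟩ => ⟨a, ha, F.trans' hxy hya⟩⟩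

theorem notMem_iff_of_isCompl_collapse (h : IsCompl (collapse A) F) (hA : A.Nonempty) (x : α) :
    x ∉ A ↔ ∃ a ∈ A, x ≠ a ∧ F x a := by
  constructor
  · intro hx
    obtain ⟨a, ha, hxa⟩ := exists_mem_rel_of_isCompl_collapse h hA x
    exact ⟨a, ha, fun hxa' => hx (hxa' ▸ ha), hxa⟩
  · rintro ⟨a, ha, hax, hxa⟩ hx
    exact hax (eq_of_isCompl_collapse h hx ha hxa)

end Setoid

namespace REPred

variable {α : Type*} [Primcodable α] {A : Set α}

theorem setoid_collapse (hA : REPred (· ∈ A)) :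
    REPred fun p : α × α => Setoid.collapse A p.1 p.2 :=
  ComputablePred.eq_fst_snd.to_re.or ((hA.comp Computable.fst).and (hA.comp Computable.snd))

theorem notMem_of_isCompl_collapse {F : Setoid α} (hA : REPred (· ∈ A))
    (hF : REPred fun p : α × α => F p.1 p.2) (h : IsCompl (Setoid.collapse A) F) :
    REPred (· ∉ A) := by
  rcases A.eq_empty_or_nonempty with rfl | hne
  · exact (Partrec.const' (Part.some ())).dom_re.of_eq fun _ => by simp
  refine (exists_snd (q := fun p : α × α => p.2 ∈ A ∧ p.1 ≠ p.2 ∧ F p.1 p.2) ?_).of_eq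
    fun x => (Setoid.notMem_iff_of_isCompl_collapse h hne x).symm
  exact (hA.comp Computable.snd).and (ComputablePred.eq_fst_snd.not.to_re.and hF)

end REPred

theorem exists_re_set_not_re_compl : ∃ A : Set ℕ, REPred (· ∈ A) ∧ ¬REPred (· ∉ A) := by
  refine ⟨{n | (eval (Denumerable.ofNat Code n) 0).Dom},
    (ComputablePred.halting_problem_re 0).comp (Computable.ofNat Code), fun h => ?_⟩
  exact ComputablePred.halting_problem_not_re 0 <|
    (h.comp Computable.encode).of_eq fun c => by simp [Denumerable.ofNat_encode]

/-- There is a recursively enumerable equivalence relation on ℕ none of whose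
complements in the lattice `Setoid ℕ` is recursively enumerable. -/
theorem re_without_re_complement :
    ∃ E : Setoid ℕ,
      REPred' (fun p : ℕ × ℕ => E.r p.1 p.2) ∧
      ∀ F : Setoid ℕ, IsCompl E F → ¬ REPred' (fun p : ℕ × ℕ => F.r p.1 p.2) := by
  obtain ⟨A, hA, hAc⟩ := exists_re_set_not_re_compl
  exact ⟨Setoid.collapse A, hA.setoid_collapse,
    fun F hF hFre => hAc (hA.notMem_of_isCompl_collapse hFre hF)⟩
end

section
/- For every set I ⊆ ℕ there exists a sequence (F_i)_{i ∈ ℕ} of equivalence relations on ℕ such that each F_i is computable and has only finitely many equivalence classes, and the infimum ⨅ i, F_i relates x and y iff x = y or (x ∈ I and y ∈ I), i.e. it is the singular equivalence relation with non-singleton class I. -/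
/-! Replace `I` by the cofinite sets `I ∪ (n, ∞)`. Membership in a cofinite set is decidable
whatever `I` is, and a singular relation whose class is cofinite has finitely many classes.
An infimum of singular relations is the singular relation of the intersection of their classes,
and the sets `I ∪ (n, ∞)` intersect to `I`. -/

open Set

namespace Setoid

variable {α : Type*} {C : Set α}

def singular (C : Set α) : Setoid α where
  r x y := x = y ∨ (x ∈ C ∧ y ∈ C)
  iseqv :=
    { refl := fun _ => .inl rfl
      symm := by rintro x y (rfl | ⟨hx, hy⟩) <;> simp_all
      trans := by rintro x y z (rfl | ⟨hx, hy⟩) (rfl | ⟨hy', hz⟩) <;> simp_all }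

theorem singular_r {x y : α} : (singular C).r x y ↔ x = y ∨ (x ∈ C ∧ y ∈ C) :=
  Iff.rfl

theorem iInf_singular {ι : Type*} (C : ι → Set α) :
    ⨅ i, singular (C i) = singular (⋂ i, C i) := by
  ext x y
  rw [iInf, sInf_iff, forall_mem_range]
  simp only [singular_r, mem_iInter]
  by_cases hxy : x = y <;> simp [hxy, forall_and]

theorem singular_eq_ker [DecidablePred (· ∈ C)] :
    singular C = ker fun x => if hx : x ∈ C then none else some (⟨x, hx⟩ : ↥Cᶜ) := by
  ext x y
  rw [singular_r, ker_def]
  by_cases hx : x ∈ C <;> by_cases hy : y ∈ C <;> simp [hx, hy]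
  all_goals rintro rfl; contradiction

theorem finite_quotient_singular (hC : Cᶜ.Finite) : Finite (Quotient (singular C)) := by
  classical
  have : Finite ↥Cᶜ := hC
  rw [singular_eq_ker]
  exact .of_equiv _ (quotientKerEquivRange _).symm

theorem primrecPred_singular [Primcodable α] [DecidableEq α] (hC : PrimrecPred (· ∈ C)) :
    PrimrecPred fun p : α × α => (singular C).r p.1 p.2 :=
  (Primrec.eq.comp .fst .snd).or ((hC.comp .fst).and (hC.comp .snd))

end Setoid

theorem Set.Finite.primrecPred_mem {α : Type*} [Primcodable α] [DecidableEq α] {s : Set α}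
    (hs : s.Finite) : PrimrecPred (· ∈ s) :=
  (PrimrecRel.exists_mem_list Primrec.eq).comp (.const hs.toFinset.toList) .id |>.of_eq <| by simp

theorem Set.Finite.primrecPred_mem_of_compl {α : Type*} [Primcodable α] [DecidableEq α]
    {s : Set α} (hs : sᶜ.Finite) : PrimrecPred (· ∈ s) :=
  hs.primrecPred_mem.not.of_eq fun _ => not_not

theorem Nat.iInter_union_Ioi (I : Set ℕ) : ⋂ n, I ∪ Ioi n = I :=
  Subset.antisymm (fun x hx => (mem_iInter.1 hx x).resolve_right (lt_irrefl x))
    (subset_iInter fun _ => subset_union_left)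

/-- For every `I ⊆ ℕ` there is a sequence of computable equivalence relations on ℕ,
each with finitely many classes, whose infimum is the singular equivalence relation
with non-singleton class `I`. -/
theorem singular_as_iInf_of_computable (I : Set ℕ) :
    ∃ F : ℕ → Setoid ℕ,
      (∀ i, ComputablePred fun p : ℕ × ℕ => (F i).r p.1 p.2) ∧
      (∀ i, Finite (Quotient (F i))) ∧
      (∀ x y : ℕ, (⨅ i, F i).r x y ↔ (x = y ∨ (x ∈ I ∧ y ∈ I))) := by
  have hcofinite (n : ℕ) : (I ∪ Ioi n)ᶜ.Finite :=
    (finite_Iic n).subset <| compl_Ioi (a := n) ▸ compl_subset_compl.2 subset_union_right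
  refine ⟨fun n => Setoid.singular (I ∪ Ioi n), fun n => ?_, fun n => ?_, fun x y => ?_⟩
  · exact (Setoid.primrecPred_singular (hcofinite n).primrecPred_mem_of_compl).computablePred
  · exact Setoid.finite_quotient_singular (hcofinite n)
  · rw [Setoid.iInf_singular, Nat.iInter_union_Ioi]
    rfl
end

section
/- There exists a family R : ℕ → ℕ → ℕ → Prop such that the predicate fun t : ℕ × ℕ × ℕ => R t.1 t.2.1 t.2.2 is computable (ComputablePred), for every n the relation R n is an equivalence relation on ℕ, and yet the infimum relation relating x and y iff R n x y holds for every n (which is an equivalence relation) is not computable: the predicate fun p : ℕ × ℕ => ∀ n, R n p.1 p.2 is not a computable predicate. -/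
/-!
Let `S n` be the set of (numbers of) codes that have not halted on input `0` after `n` steps, and
let `R n` identify all points of `S n` while keeping every other point in its own class. Each
`S n` is primitive recursive, so the family is computable. The infimum identifies exactly the
points of `⋂ n, S n`, the codes that never halt, and deciding whether `x` is related to one fixed
non-halting code would decide the halting problem.
-/

open Nat.Partrec (Code)

def collapseRel {α : Type*} (S : Set α) (x y : α) : Prop :=
  x = y ∨ (x ∈ S ∧ y ∈ S)

section collapseRel

variable {α : Type*}

theorem equivalence_collapseRel (S : Set α) : Equivalence (collapseRel S) where
  refl _ := Or.inl rfl
  symm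
    | Or.inl h => Or.inl h.symm
    | Or.inr ⟨hx, hy⟩ => Or.inr ⟨hy, hx⟩
  trans
    | Or.inl rfl, h => h
    | h, Or.inl rfl => h
    | Or.inr ⟨hx, _⟩, Or.inr ⟨_, hz⟩ => Or.inr ⟨hx, hz⟩

theorem forall_collapseRel_iff {ι : Sort*} (S : ι → Set α) (x y : α) :
    (∀ i, collapseRel (S i) x y) ↔ collapseRel (⋂ i, S i) x y := by
  simp only [collapseRel, Set.mem_iInter, ← forall_and, forall_or_left]

theorem collapseRel_iff_mem {S : Set α} {a : α} (ha : a ∈ S) (x : α) :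
    collapseRel S a x ↔ x ∈ S := by
  constructor
  · rintro (rfl | ⟨-, hx⟩) <;> assumption
  · exact fun hx => Or.inr ⟨ha, hx⟩

variable [Primcodable α]

theorem primrecPred_collapseRel {ι : Type*} [Primcodable ι] {S : ι → Set α}
    (hS : PrimrecPred fun p : ι × α => p.2 ∈ S p.1) :
    PrimrecPred fun t : ι × α × α => collapseRel (S t.1) t.2.1 t.2.2 :=
  (Primrec.eq.comp (Primrec.fst.comp Primrec.snd) (Primrec.snd.comp Primrec.snd)).or <|
    (hS.comp (Primrec.fst.pair (Primrec.fst.comp Primrec.snd))).and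
      (hS.comp (Primrec.fst.pair (Primrec.snd.comp Primrec.snd)))

theorem not_computablePred_collapseRel {S : Set α} (hS : ¬ComputablePred (· ∈ S)) :
    ¬ComputablePred fun p : α × α => collapseRel S p.1 p.2 := by
  obtain ⟨a, ha⟩ : S.Nonempty := by
    refine Set.nonempty_iff_ne_empty.2 fun hempty => hS ?_
    simpa [hempty] using (Computable.const false).computablePred
  intro hcollapse
  exact hS <| ComputablePred.computable_of_manyOneReducible
    ⟨fun x => (a, x), (Computable.const a).pair .id, fun x => (collapseRel_iff_mem ha x).symm⟩
    hcollapse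

end collapseRel

def notHaltedWithin (n : ℕ) : Set ℕ :=
  {x | Code.evaln n (Denumerable.ofNat Code x) 0 = none}

def neverHalts : Set ℕ :=
  {x | ¬(Code.eval (Denumerable.ofNat Code x) 0).Dom}

theorem primrecPred_notHaltedWithin :
    PrimrecPred fun p : ℕ × ℕ => p.2 ∈ notHaltedWithin p.1 :=
  Primrec.eq.comp
    (Code.primrec_evaln.comp <|
      (Primrec.fst.pair ((Primrec.ofNat Code).comp Primrec.snd)).pair (Primrec.const 0))
    (Primrec.const none)

theorem iInter_notHaltedWithin : ⋂ n, notHaltedWithin n = neverHalts := by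
  ext x
  simp only [Set.mem_iInter, notHaltedWithin, neverHalts, Set.mem_ofPred_eq, Part.dom_iff_mem,
    Code.evaln_complete, Option.eq_none_iff_forall_not_mem, not_exists]
  exact forall_comm

theorem not_computablePred_neverHalts : ¬ComputablePred (· ∈ neverHalts) := fun h =>
  ComputablePred.halting_problem_not_re 0 <| ComputablePred.to_re <|
    ComputablePred.computable_of_manyOneReducible
      ⟨Encodable.encode, Computable.encode, fun c => by simp [neverHalts]⟩ h

/-- There is a uniformly computable family of equivalence relations on ℕ whose
infimum—the relation relating `x` and `y` iff `R n x y` for every `n`—is an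
equivalence relation that is not computable. -/
theorem computable_family_with_noncomputable_iInf :
    ∃ R : ℕ → ℕ → ℕ → Prop,
      ComputablePred (fun t : ℕ × ℕ × ℕ => R t.1 t.2.1 t.2.2) ∧
      (∀ n, Equivalence (R n)) ∧
      Equivalence (fun x y : ℕ => ∀ n, R n x y) ∧
      ¬ ComputablePred (fun p : ℕ × ℕ => ∀ n, R n p.1 p.2) := by
  have hiInf :
      (fun x y : ℕ => ∀ n, collapseRel (notHaltedWithin n) x y) = collapseRel neverHalts := by
    simp only [forall_collapseRel_iff, iInter_notHaltedWithin]
  refine ⟨fun n => collapseRel (notHaltedWithin n),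
    (primrecPred_collapseRel primrecPred_notHaltedWithin).computablePred,
    fun n => equivalence_collapseRel _, hiInf ▸ equivalence_collapseRel _, ?_⟩
  simpa only [forall_collapseRel_iff, iInter_notHaltedWithin] using
    not_computablePred_collapseRel not_computablePred_neverHalts
end
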